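/- If M is an R-module such that R_f ⊗_R M is a finitely generated R_f-module and R̂ ⊗_R M is a finitely generated R̂-module, then M is a finitely generated R-module. -/

import Mathlib

/-!
Pick a finitely generated submodule `N ≤ M` whose image generates both `R_f ⊗ M` and `R̂ ⊗ M`.
By right exactness of `⊗`, the quotient `Q = M ⧸ N` satisfies `R_f ⊗ Q = 0` and `R̂ ⊗ Q = 0`.
The first makes every `q ∈ Q` killed by some `f ^ n`; then `R ∙ q` is a module over `R ⧸ (f ^ n)`,
through which `R̂` maps, so `c ↦ 1 ⊗ c` is injective on it. As `R̂` is flat over the noetherian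
ring `R`, `R̂ ⊗ (R ∙ q)` embeds into `R̂ ⊗ Q = 0`, hence `q = 0` and `M = N`.
-/

open TensorProduct

set_option maxHeartbeats 1000000
set_option synthInstance.maxHeartbeats 400000

noncomputable section

variable (R : Type*) [CommRing R] (f : R)

/-- The `(f)`-adic completion `R̂` of `R`. -/
abbrev Rhat : Type _ := AdicCompletion (Ideal.span {f}) R

/-- The localization `R_f = R[f⁻¹]`. -/
abbrev Rf : Type _ := Localization.Away f

section BaseChange

variable {R} {M : Type*} [AddCommGroup M] [Module R M] (A : Type*) [CommRing A] [Algebra R A]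

theorem Submodule.exists_fg_baseChange_eq_top [Module.Finite A (A ⊗[R] M)] :
    ∃ N : Submodule R M, N.FG ∧ N.baseChange A = ⊤ := by
  classical
  have hspan : Submodule.span A (TensorProduct.mk R A M 1 '' Set.univ) = ⊤ := by
    rw [← Submodule.baseChange_span, Submodule.span_univ, Submodule.baseChange_top]
  obtain ⟨t, ht, hspan_t⟩ := (Submodule.fg_span_iff_fg_span_finset_subset _).mp
    (hspan ▸ Module.Finite.fg_top)
  obtain ⟨s, -, rfl⟩ := Finset.subset_set_image_iff.mp ht
  refine ⟨Submodule.span R s, Submodule.fg_span s.finite_toSet, ?_⟩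
  rw [Submodule.baseChange_span, ← hspan, hspan_t, Finset.coe_image]

theorem Submodule.subsingleton_tensor_quotient_of_baseChange_eq_top {N N' : Submodule R M}
    (hle : N ≤ N') (h : N.baseChange A = ⊤) : Subsingleton (A ⊗[R] (M ⧸ N')) := by
  have hker : LinearMap.ker (N'.mkQ.lTensor A) = ⊤ := by
    rw [lTensor_mkQ, eq_top_iff]
    intro x _
    obtain ⟨y, rfl⟩ : x ∈ N'.baseChange A :=
      top_unique (h ▸ Submodule.baseChange_mono A hle) ▸ Submodule.mem_top
    exact ⟨y, congrFun (LinearMap.baseChange_eq_ltensor _).symm y⟩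
  refine subsingleton_of_forall_eq 0 fun x ↦ ?_
  obtain ⟨y, rfl⟩ := LinearMap.lTensor_surjective A N'.mkQ_surjective x
  exact LinearMap.mem_ker.mp (hker ▸ Submodule.mem_top)

end BaseChange

theorem IsLocalization.Away.exists_pow_smul_eq_zero_of_subsingleton_tensor {R : Type*}
    [CommRing R] (S : Type*) [CommRing S] [Algebra R S] (f : R) [IsLocalization.Away f S]
    {Q : Type*} [AddCommGroup Q] [Module R Q] [Subsingleton (S ⊗[R] Q)] (q : Q) :
    ∃ n : ℕ, f ^ n • q = 0 := by
  obtain ⟨_, ⟨n, rfl⟩, hn⟩ :=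
    (IsLocalizedModule.subsingleton_iff (.powers f) (TensorProduct.mk R S Q 1)).mp ‹_› q
  exact ⟨n, hn⟩

namespace AdicCompletion

variable {R} (I : Ideal R)

theorem mk_one_injective_of_pow_smul_top_eq_bot {C : Type*} [AddCommGroup C] [Module R C]
    {n : ℕ} (h : I ^ n • (⊤ : Submodule R C) = ⊥) :
    Function.Injective (TensorProduct.mk R (AdicCompletion I R) C 1) := by
  let reduce : AdicCompletion I R ⊗[R] C →ₗ[R] C ⧸ (I ^ n • ⊤ : Submodule R C) :=
    (quotTensorEquivQuotSMul C (I ^ n)).toLinearMap ∘ₗ (evalₐ I n).toLinearMap.rTensor C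
  have reduce_one_tmul (c : C) : reduce (1 ⊗ₜ c) = Submodule.Quotient.mk c := by
    simp [reduce]
  intro c c' hcc'
  have := congrArg reduce hcc'
  rwa [mk_apply, mk_apply, reduce_one_tmul, reduce_one_tmul, Submodule.Quotient.eq, h,
    Submodule.mem_bot, sub_eq_zero] at this

theorem eq_zero_of_subsingleton_tensor [IsNoetherianRing R] {Q : Type*} [AddCommGroup Q]
    [Module R Q] [Subsingleton (AdicCompletion I R ⊗[R] Q)] {q : Q} {n : ℕ}
    (hq : ∀ r ∈ I ^ n, r • q = 0) : q = 0 := by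
  set C := R ∙ q
  have hC : I ^ n • (⊤ : Submodule R C) = ⊥ := by
    rw [eq_bot_iff, Submodule.smul_le]
    rintro r hr ⟨c, hc⟩ -
    obtain ⟨a, rfl⟩ := Submodule.mem_span_singleton.mp hc
    simp [Subtype.ext_iff, smul_comm r a, hq r hr]
  have hinj := (Module.Flat.lTensor_preserves_injective_linearMap C.subtype
    C.injective_subtype).comp (mk_one_injective_of_pow_smul_top_eq_bot I hC)
  have : (⟨q, Submodule.mem_span_singleton_self q⟩ : C) = 0 := hinj (Subsingleton.elim _ _)
  simpa using congrArg Subtype.val this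

end AdicCompletion

theorem subsingleton_of_subsingleton_tensor_away_of_subsingleton_tensor_adicCompletion
    [IsNoetherianRing R] {Q : Type*} [AddCommGroup Q] [Module R Q]
    (hRf : Subsingleton (Rf R f ⊗[R] Q)) (hRhat : Subsingleton (Rhat R f ⊗[R] Q)) :
    Subsingleton Q := by
  refine subsingleton_of_forall_eq 0 fun q ↦ ?_
  obtain ⟨n, hn⟩ := IsLocalization.Away.exists_pow_smul_eq_zero_of_subsingleton_tensor (Rf R f) f q
  refine AdicCompletion.eq_zero_of_subsingleton_tensor (Ideal.span {f}) (n := n) fun r hr ↦ ?_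
  obtain ⟨a, rfl⟩ := Ideal.mem_span_singleton'.mp (Ideal.span_singleton_pow f n ▸ hr)
  rw [mul_smul, hn, smul_zero]

theorem stmt9 [IsNoetherianRing R]
    (M : Type*) [AddCommGroup M] [Module R M]
    (h1 : Module.Finite (Rf R f) (Rf R f ⊗[R] M))
    (h2 : Module.Finite (Rhat R f) (Rhat R f ⊗[R] M)) :
    Module.Finite R M := by
  obtain ⟨N₁, hN₁, hN₁_top⟩ := Submodule.exists_fg_baseChange_eq_top (R := R) (M := M) (Rf R f)
  obtain ⟨N₂, hN₂, hN₂_top⟩ :=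
    Submodule.exists_fg_baseChange_eq_top (R := R) (M := M) (Rhat R f)
  have hQ : Subsingleton (M ⧸ (N₁ ⊔ N₂)) :=
    subsingleton_of_subsingleton_tensor_away_of_subsingleton_tensor_adicCompletion R f
      (Submodule.subsingleton_tensor_quotient_of_baseChange_eq_top _ le_sup_left hN₁_top)
      (Submodule.subsingleton_tensor_quotient_of_baseChange_eq_top _ le_sup_right hN₂_top)
  rw [Module.finite_def, ← Submodule.Quotient.subsingleton_iff.mp hQ]
  exact hN₁.sup hN₂
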